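/- Fix d ≥ 2, β₁ > 0, and set p₀(β₁) := 1/(1 + exp(−2dβ₁)). Then for every integer L ≥ 1, every integer n ≥ 2 and every β₂ > 0, the Wells disorder ν_{L,n,β₁,β₂} is stochastically dominated by the product Bernoulli(p₀(β₁)) measure on {0,1}^{Λ_L}: for every nondecreasing function f : {0,1}^{Λ_L} → [0,∞) (with respect to the pointwise partial order), Σ_{r∈{0,1}^{Λ_L}} f(r)·ν_{L,n,β₁,β₂}({r}) ≤ Σ_{r∈{0,1}^{Λ_L}} f(r)·∏_{x∈Λ_L} p₀(β₁)^{r_x}(1−p₀(β₁))^{1−r_x}. -/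

import Mathlib

open MeasureTheory Real

noncomputable section

/-- Vertices of `ℤ^d`. -/
abbrev Vertex (d : ℕ) := Fin d → ℤ

/-- The box `Λ_L = {-L, …, L}^d ⊆ ℤ^d`. -/
def box (d L : ℕ) : Finset (Vertex d) :=
  Fintype.piFinset fun _ : Fin d => Finset.Icc (-(L : ℤ)) (L : ℤ)

/-- The set `E(Λ)` of nearest-neighbour edges with both endpoints in `Λ`; each
unordered edge `{x, x + eᵢ}` is recorded exactly once, as the ordered pair
`(x, x + eᵢ)` (i.e. with the coordinatewise-smaller endpoint first). -/
def edges (d : ℕ) (Λ : Finset (Vertex d)) : Finset (Vertex d × Vertex d) :=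
  (Λ ×ˢ Λ).filter fun p => (∑ i, |p.2 i - p.1 i|) = 1 ∧ ∀ i, p.1 i ≤ p.2 i

/-- Euclidean norm of a lattice point. -/
def euclNorm {d : ℕ} (x : Vertex d) : ℝ := Real.sqrt (∑ i, ((x i : ℝ)) ^ 2)

/-- Sup norm of a lattice point. -/
def supNorm {d : ℕ} (x : Vertex d) : ℕ := Finset.univ.sup fun i => (x i).natAbs

/-- The Villain kernel `v_β`, with the convention `v_0 ≡ 1`. -/
def villainKer (β θ : ℝ) : ℝ :=
  if β = 0 then 1
  else Real.sqrt (2 * π * β) * ∑' k : ℤ, Real.exp (-(β / 2) * (θ - 2 * π * (k : ℝ)) ^ 2)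

/-- Lebesgue measure on `[0, 2π)^ι`. -/
def angleMeasure (ι : Type*) [Fintype ι] : Measure (ι → ℝ) :=
  volume.restrict (Set.univ.pi fun _ => Set.Ico (0 : ℝ) (2 * π))

/-- Extension of a function on (the coercion to a type of) a finset `Λ` to a
function on all of `V`, by zero. -/
def extFun {V : Type*} [DecidableEq V] {α : Type*} [Zero α] (Λ : Finset V) (θ : ↑Λ → α) :
    V → α :=
  fun x => if h : x ∈ Λ then θ ⟨x, h⟩ else 0

/-- The expectation of an observable `f` under the spin system on `Λ ⊆ ℤ^d` whose
density with respect to the product Lebesgue measure on `[0,2π)^Λ` is proportional to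
`∏_{{x,y} ∈ E(Λ)} w_{xy}(θ_x − θ_y)`. -/
def spinExp (d : ℕ) (Λ : Finset (Vertex d)) (w : ↑(edges d Λ) → ℝ → ℝ)
    (f : (Vertex d → ℝ) → ℝ) : ℝ :=
  (∫ θ : ↑Λ → ℝ,
      f (extFun Λ θ) * ∏ e : ↑(edges d Λ), w e (extFun Λ θ e.1.1 - extFun Λ θ e.1.2)
      ∂(angleMeasure ↑Λ)) /
  (∫ θ : ↑Λ → ℝ,
      ∏ e : ↑(edges d Λ), w e (extFun Λ θ e.1.1 - extFun Λ θ e.1.2)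
      ∂(angleMeasure ↑Λ))

/-- Expectation with respect to i.i.d. Bernoulli(p) `{0,1}`-valued random variables
indexed by a finite type `α`. -/
def bernoulliSum {α : Type*} [Fintype α] [DecidableEq α] (p : ℝ) (f : (α → Bool) → ℝ) : ℝ :=
  ∑ ω : α → Bool, (∏ a : α, if ω a then p else 1 - p) * f ω

/-- The two-point observable `cos(θ_0 − θ_x)`. -/
def twoPointObs {d : ℕ} (x : Vertex d) : (Vertex d → ℝ) → ℝ :=
  fun θ => Real.cos (θ 0 - θ x)


/-- A vertex of the extended lattice `ℤ^d_n`: either a lattice vertex `x ∈ ℤ^d`, or the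
`(t+1)`-st of the `n−1` vertices inserted on the edge from `x` to `x + eᵢ` (encoded as
`(x, i, t)` with `t : Fin (n-1)`).  For `n = 1` the extended lattice is `ℤ^d` itself. -/
abbrev ExtVertex (d n : ℕ) := (Fin d → ℤ) ⊕ ((Fin d → ℤ) × Fin d × Fin (n - 1))

/-- The `i`-th unit vector of `ℤ^d`. -/
def unitVec (d : ℕ) (i : Fin d) : Fin d → ℤ := fun j => if j = i then 1 else 0

/-- Adjacency in the extended lattice `ℤ^d_n`: each nearest-neighbour edge
`{x, x + eᵢ}` of `ℤ^d` is subdivided into the path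
`x, (x,i,0), (x,i,1), …, (x,i,n-2), x + eᵢ` of `n` edges. -/
def extAdj (d n : ℕ) : ExtVertex d n → ExtVertex d n → Prop
  | .inl x, .inl y => n = 1 ∧ (∑ i, |y i - x i|) = 1
  | .inl x, .inr (y, i, t) =>
      (x = y ∧ (t : ℕ) = 0) ∨ (x = y + unitVec d i ∧ (t : ℕ) = n - 2)
  | .inr (y, i, t), .inl x =>
      (x = y ∧ (t : ℕ) = 0) ∨ (x = y + unitVec d i ∧ (t : ℕ) = n - 2)
  | .inr (y, i, t), .inr (y', i', t') =>
      y = y' ∧ i = i' ∧ ((t : ℕ) + 1 = (t' : ℕ) ∨ (t' : ℕ) + 1 = (t : ℕ))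

open Classical in
/-- The energy `Σ_{{u,w} ∈ E(Λ)} r_u r_w J_{uw} cos(θ_u − θ_w)` of the XY model on a
finite set `Λ` of vertices of `ℤ^d_n` with conductances `J` and site weights `r`
(each unordered edge `{u,w} ⊆ Λ` is counted once, whence the factor `1/2` in front of
the sum over ordered pairs). -/
def xyEnergy (d n : ℕ) (Λ : Finset (ExtVertex d n)) (J : ExtVertex d n → ExtVertex d n → ℝ)
    (r : ExtVertex d n → ℝ) (θ : ExtVertex d n → ℝ) : ℝ :=
  (1 / 2) * ∑ u ∈ Λ, ∑ w ∈ Λ,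
    if extAdj d n u w then r u * r w * J u w * Real.cos (θ u - θ w) else 0

/-- The partition function `Z_{Λ,J,r}` of the XY model on `Λ ⊆ ℤ^d_n`. -/
def xyZ (d n : ℕ) (Λ : Finset (ExtVertex d n)) (J : ExtVertex d n → ExtVertex d n → ℝ)
    (r : ExtVertex d n → ℝ) : ℝ :=
  ∫ θ : ↑Λ → ℝ, Real.exp (xyEnergy d n Λ J r (extFun Λ θ)) ∂(angleMeasure ↑Λ)

/-- The expectation `⟨f⟩_{Λ,J,r}` of an observable for the XY model on `Λ ⊆ ℤ^d_n`. -/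
def xyExp (d n : ℕ) (Λ : Finset (ExtVertex d n)) (J : ExtVertex d n → ExtVertex d n → ℝ)
    (r : ExtVertex d n → ℝ) (f : (ExtVertex d n → ℝ) → ℝ) : ℝ :=
  (∫ θ : ↑Λ → ℝ, f (extFun Λ θ) * Real.exp (xyEnergy d n Λ J r (extFun Λ θ))
      ∂(angleMeasure ↑Λ)) / xyZ d n Λ J r

/-- The box `Λ_L^n ⊆ ℤ^d_n`: the box `Λ_L ⊆ ℤ^d` together with the vertices inserted
on the edges of `Λ_L`. -/
def extBox (d n L : ℕ) : Finset (ExtVertex d n) :=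
  ((box d L).image Sum.inl) ∪
    ((((box d L) ×ˢ (Finset.univ : Finset (Fin d × Fin (n - 1)))).filter
        fun p => p.1 + unitVec d p.2.1 ∈ box d L).image
      fun p => Sum.inr (p.1, p.2.1, p.2.2))

/-- Conductances of the model `(β₁, nβ₂)`: an edge of `ℤ^d_n` incident to a lattice
vertex gets conductance `β₁`, an edge with no lattice endpoint gets `n β₂`. -/
def mixedJ (d n : ℕ) (β₁ β₂ : ℝ) : ExtVertex d n → ExtVertex d n → ℝ := fun u w =>
  match u, w with
  | .inr _, .inr _ => (n : ℝ) * β₂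
  | _, _ => β₁

/-- A site configuration `r ∈ {0,1}^{Λ_L}` viewed as a weight on the vertices of
`ℤ^d_n`, extended by `1` off `Λ_L` and on all non-lattice vertices.  On an edge
`{x,u}` of `Λ_L^n` with lattice endpoint `x` this produces exactly the factor `r_x`. -/
def boxSiteVal (d n L : ℕ) (r : ↑(box d L) → Bool) : ExtVertex d n → ℝ :=
  fun u => match u with
    | .inl x => if h : x ∈ box d L then (if r ⟨x, h⟩ then 1 else 0) else 1
    | .inr _ => 1

/-- The partition function `Z_{L,n,β₁,β₂,r}`. -/
def wellsZ (d n L : ℕ) (β₁ β₂ : ℝ) (r : ↑(box d L) → Bool) : ℝ :=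
  xyZ d n (extBox d n L) (mixedJ d n β₁ β₂) (boxSiteVal d n L r)

/-- The Wells disorder `ν_{L,n,β₁,β₂}` on `{0,1}^{Λ_L}`. -/
def wellsNu (d n L : ℕ) (β₁ β₂ : ℝ) (r : ↑(box d L) → Bool) : ℝ :=
  wellsZ d n L β₁ β₂ r / ∑ r' : ↑(box d L) → Bool, wellsZ d n L β₁ β₂ r'

/-!
Switching a lattice site `x` on only switches on the at most `2d` edges of `ℤ^d_n` at `x`,
each of conductance `β₁`, so it raises the energy by at most `2dβ₁`:
`Z(r, r_x = 1) ≤ e^{2dβ₁} Z(r, r_x = 0)`. Hence, whatever the other sites do, the conditional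
odds of `r_x = 1` are at most `e^{2dβ₁} = p₀/(1 - p₀)`. Redrawing the sites one at a time from
Bernoulli(`p₀`) can then only increase the expectation of a monotone observable, and once every
site has been redrawn the expectation is the one under the Bernoulli product measure.
-/

section Domination

variable {α : Type*} [Fintype α] [DecidableEq α]

def resampleKernel (p : ℝ) (s : Finset α) (u r : α → Bool) : ℝ :=
  ∏ x, if x ∈ s then (if r x then p else 1 - p) else if r x = u x then 1 else 0

/-- The expectation of `f` after the coordinates of `u` in `s` are redrawn independently from
Bernoulli(`p`). -/
def resample (p : ℝ) (s : Finset α) (f : (α → Bool) → ℝ) (u : α → Bool) : ℝ :=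
  ∑ r, resampleKernel p s u r * f r

lemma resample_empty (p : ℝ) (f : (α → Bool) → ℝ) : resample p ∅ f = f := by
  funext u
  simp [resample, resampleKernel, Fintype.prod_boole, ← funext_iff]

lemma resample_univ (p : ℝ) (f : (α → Bool) → ℝ) (u : α → Bool) :
    resample p Finset.univ f u = bernoulliSum p f := by
  simp [resample, resampleKernel, bernoulliSum]

lemma resampleKernel_insert (p : ℝ) {a : α} {s : Finset α} (ha : a ∉ s) (u r : α → Bool) :
    resampleKernel p (insert a s) u r =
      (1 - p) * resampleKernel p s (Function.update u a false) r +
        p * resampleKernel p s (Function.update u a true) r := by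
  have hrest : ∀ b, ∏ x ∈ {a}ᶜ, (if x ∈ s then (if r x then p else 1 - p)
      else if r x = Function.update u a b x then 1 else 0) =
      ∏ x ∈ {a}ᶜ, (if x ∈ insert a s then (if r x then p else 1 - p)
      else if r x = u x then 1 else 0) := by
    intro b
    refine Finset.prod_congr rfl fun x hx => ?_
    have hxa : x ≠ a := by simpa using hx
    simp [hxa]
  simp only [resampleKernel, Fintype.prod_eq_mul_prod_compl a, hrest]
  cases r a <;> simp [ha]

lemma resample_insert (p : ℝ) {a : α} {s : Finset α} (ha : a ∉ s) (f : (α → Bool) → ℝ)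
    (u : α → Bool) :
    resample p (insert a s) f u =
      (1 - p) * resample p s f (Function.update u a false) +
        p * resample p s f (Function.update u a true) := by
  simp only [resample, resampleKernel_insert p ha, Finset.mul_sum]
  rw [← Finset.sum_add_distrib]
  exact Finset.sum_congr rfl fun r _ => by ring

lemma monotone_resample {p : ℝ} (hp0 : 0 ≤ p) (hp1 : p ≤ 1) (s : Finset α)
    {f : (α → Bool) → ℝ} (hf : Monotone f) : Monotone (resample p s f) := by
  induction s using Finset.induction_on with
  | empty => rwa [resample_empty]
  | insert a s ha ih =>
    intro u v huv
    rw [resample_insert p ha, resample_insert p ha]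
    have hupd : ∀ b, Function.update u a b ≤ Function.update v a b := fun b =>
      update_le_update_iff.mpr ⟨le_rfl, fun j _ => huv j⟩
    gcongr <;> first | linarith | exact ih (hupd _)

lemma sum_eq_sum_filter_add_update {M : Type*} [AddCommMonoid M] (a : α) (F : (α → Bool) → M) :
    ∑ u, F u = ∑ u with u a = false, (F u + F (Function.update u a true)) := by
  rw [Finset.sum_add_distrib, ← Finset.sum_filter_add_sum_filter_not Finset.univ (· a = false)]
  congr 1
  refine Finset.sum_nbij' (Function.update · a false) (Function.update · a true) ?_ ?_ ?_ ?_ ?_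
  all_goals intro u hu
  all_goals simp_all [Function.update_idem]
  · rw [← hu, Function.update_eq_self]

lemma sum_mul_le_sum_mul_resample_site {p : ℝ} {Z : (α → Bool) → ℝ} (a : α)
    (hodds : ∀ r, (1 - p) * Z (Function.update r a true) ≤ p * Z (Function.update r a false))
    {g : (α → Bool) → ℝ} (hg : Monotone g) :
    ∑ u, Z u * g u ≤
      ∑ u, Z u * ((1 - p) * g (Function.update u a false) + p * g (Function.update u a true)) := by
  rw [sum_eq_sum_filter_add_update a, sum_eq_sum_filter_add_update a]
  refine Finset.sum_le_sum fun u hu => ?_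
  have hu : Function.update u a false = u := by
    rw [← (Finset.mem_filter.mp hu).2, Function.update_eq_self]
  have hodds_u := hodds u
  have hmono : g u ≤ g (Function.update u a true) := by
    have hle : Function.update u a false ≤ Function.update u a true :=
      update_le_update_iff'.mpr (Bool.false_le true)
    rw [hu] at hle
    exact hg hle
  rw [hu] at hodds_u
  rw [Function.update_idem, Function.update_idem, hu]
  -- the difference of the two sides is `(g₁ - g₀) (p Z₀ - (1 - p) Z₁) ≥ 0`
  nlinarith [mul_nonneg (sub_nonneg.2 hmono) (sub_nonneg.2 hodds_u)]

theorem sum_mul_le_mul_bernoulliSum {p : ℝ} (hp0 : 0 ≤ p) (hp1 : p ≤ 1) {Z : (α → Bool) → ℝ}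
    (hodds : ∀ a r, (1 - p) * Z (Function.update r a true) ≤ p * Z (Function.update r a false))
    {f : (α → Bool) → ℝ} (hf : Monotone f) :
    ∑ r, Z r * f r ≤ (∑ r, Z r) * bernoulliSum p f := by
  have hresample : ∀ s : Finset α, ∑ r, Z r * f r ≤ ∑ r, Z r * resample p s f r := by
    intro s
    induction s using Finset.induction_on with
    | empty => rw [resample_empty]
    | insert a s ha ih =>
      simp only [resample_insert p ha]
      exact ih.trans (sum_mul_le_sum_mul_resample_site a (hodds a)
        (monotone_resample hp0 hp1 s hf))
  simpa [resample_univ, Finset.sum_mul] using hresample Finset.univ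

end Domination

section ExtendedLattice

variable {d n : ℕ}

lemma extAdj_comm (u w : ExtVertex d n) : extAdj d n u w ↔ extAdj d n w u := by
  rcases u with x | ⟨x, i, t⟩ <;> rcases w with y | ⟨y, j, s⟩
  · simp only [extAdj, abs_sub_comm]
  all_goals simp only [extAdj]
  · constructor <;> rintro ⟨rfl, rfl, h⟩ <;> exact ⟨rfl, rfl, h.symm⟩

open Classical in
lemma card_filter_extAdj_inl_le (hn : 2 ≤ n) (Λ : Finset (ExtVertex d n)) (x : Vertex d) :
    (Λ.filter (extAdj d n (.inl x))).card ≤ 2 * d := by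
  let nbr : Fin d × Bool → ExtVertex d n := fun ib =>
    if ib.2 then .inr (x, ib.1, ⟨0, by omega⟩)
    else .inr (x - unitVec d ib.1, ib.1, ⟨n - 2, by omega⟩)
  have hsub : Λ.filter (extAdj d n (.inl x)) ⊆ Finset.univ.image nbr := by
    intro w hw
    simp only [Finset.mem_filter] at hw
    rcases w with y | ⟨y, i, t⟩
    · exact absurd hw.2.1 (by omega)
    · rcases hw.2 with ⟨rfl, ht⟩ | ⟨rfl, ht⟩
      · exact Finset.mem_image.mpr ⟨(i, true), Finset.mem_univ _, by simp [nbr, Fin.ext_iff, ht]⟩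
      · exact Finset.mem_image.mpr ⟨(i, false), Finset.mem_univ _, by simp [nbr, Fin.ext_iff, ht]⟩
  calc (Λ.filter (extAdj d n (.inl x))).card ≤ (Finset.univ.image nbr).card :=
        Finset.card_le_card hsub
    _ ≤ Fintype.card (Fin d × Bool) := Finset.card_image_le
    _ = 2 * d := by simp [mul_comm]

lemma mul_mul_mul_cos_le {a b J K : ℝ} (ha : |a| ≤ 1) (hb : |b| ≤ 1) (hJ : |J| ≤ K) (t : ℝ) :
    a * b * J * Real.cos t ≤ K :=
  calc a * b * J * Real.cos t ≤ |a| * |b| * |J| * |Real.cos t| := by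
        simpa only [abs_mul] using le_abs_self (a * b * J * Real.cos t)
    _ ≤ 1 * 1 * K * 1 := by
        have hK : 0 ≤ K := (abs_nonneg J).trans hJ
        gcongr
        exact Real.abs_cos_le_one t
    _ = K := by ring

lemma sum_sum_ite_eq_and_le {V : Type*} [DecidableEq V] (Λ : Finset V) (v : V) (P : V → Prop)
    [DecidablePred P] {K : ℝ} (hK : 0 ≤ K) :
    ∑ u ∈ Λ, ∑ w ∈ Λ, (if u = v ∧ P w then K else 0) ≤ K * (Λ.filter P).card := by
  calc ∑ u ∈ Λ, ∑ w ∈ Λ, (if u = v ∧ P w then K else 0)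
      = ∑ u ∈ Λ, if u = v then K * (Λ.filter P).card else 0 := by
        refine Finset.sum_congr rfl fun u _ => ?_
        by_cases hu : u = v
        · simp [hu, Finset.sum_ite, mul_comm]
        · simp [hu]
    _ ≤ K * (Λ.filter P).card := by
        rw [Finset.sum_ite_eq']
        split_ifs
        · exact le_rfl
        · positivity

open Classical in
lemma xyEnergy_le_add_of_eq_zero (Λ : Finset (ExtVertex d n))
    (J : ExtVertex d n → ExtVertex d n → ℝ)
    {ρ₀ ρ₁ : ExtVertex d n → ℝ} {v : ExtVertex d n} {K : ℝ}
    (hρ : ∀ u, u ≠ v → ρ₁ u = ρ₀ u) (hρ₀ : ρ₀ v = 0) (hρ₁ : ∀ u, |ρ₁ u| ≤ 1)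
    (hJ : ∀ w, |J v w| ≤ K ∧ |J w v| ≤ K) (θ : ExtVertex d n → ℝ) :
    xyEnergy d n Λ J ρ₁ θ ≤ xyEnergy d n Λ J ρ₀ θ + K * (Λ.filter (extAdj d n v)).card := by
  have hK : 0 ≤ K := (abs_nonneg _).trans (hJ v).1
  have hterm : ∀ u w,
      (if extAdj d n u w then ρ₁ u * ρ₁ w * J u w * Real.cos (θ u - θ w) else 0) ≤
        (if extAdj d n u w then ρ₀ u * ρ₀ w * J u w * Real.cos (θ u - θ w) else 0) +
          ((if u = v ∧ extAdj d n v w then K else 0) +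
            (if w = v ∧ extAdj d n v u then K else 0)) := by
    intro u w
    have hnn : ∀ (c : Prop) [Decidable c], 0 ≤ if c then K else 0 := fun c _ => by
      split_ifs <;> linarith
    by_cases hadj : extAdj d n u w
    · by_cases hu : u = v
      · subst hu
        rw [if_pos hadj, if_pos hadj, if_pos ⟨rfl, hadj⟩, hρ₀]
        have := mul_mul_mul_cos_le (hρ₁ u) (hρ₁ w) (hJ w).1 (θ u - θ w)
        linarith [hnn (w = u ∧ extAdj d n u u)]
      · by_cases hw : w = v
        · subst hw
          rw [if_pos hadj, if_pos hadj, if_neg (fun h => hu h.1),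
            if_pos ⟨rfl, (extAdj_comm u w).mp hadj⟩, hρ₀]
          have := mul_mul_mul_cos_le (hρ₁ u) (hρ₁ w) (hJ u).2 (θ u - θ w)
          linarith
        · rw [if_pos hadj, if_pos hadj, if_neg (fun h => hu h.1), if_neg (fun h => hw h.1),
            hρ u hu, hρ w hw]
          simp
    · rw [if_neg hadj, if_neg hadj]
      linarith [hnn (u = v ∧ extAdj d n v w), hnn (w = v ∧ extAdj d n v u)]
  have hsum := Finset.sum_le_sum fun u (_ : u ∈ Λ) =>
    Finset.sum_le_sum fun w (_ : w ∈ Λ) => hterm u w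
  simp only [Finset.sum_add_distrib] at hsum
  rw [Finset.sum_comm (f := fun u w => if w = v ∧ extAdj d n v u then K else 0)] at hsum
  have hA := sum_sum_ite_eq_and_le Λ v (extAdj d n v) hK
  -- each edge at `v` occurs twice in the ordered double sum, which the `1 / 2` compensates
  unfold xyEnergy
  linarith

end ExtendedLattice

section Analytic

instance (ι : Type*) [Fintype ι] : NeZero (angleMeasure ι) := by
  refine ⟨fun h => ?_⟩
  have := congrArg (· Set.univ) h
  simp [angleMeasure, volume_pi_pi] at this
  linarith [Real.pi_pos, this.1]

lemma continuous_extFun {V : Type*} [DecidableEq V] (Λ : Finset V) :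
    Continuous (extFun Λ : (↑Λ → ℝ) → V → ℝ) := by
  refine continuous_pi fun v => ?_
  unfold extFun
  split_ifs
  · exact continuous_apply _
  · exact continuous_const

variable {d n : ℕ}

lemma continuous_xyEnergy (Λ : Finset (ExtVertex d n)) (J : ExtVertex d n → ExtVertex d n → ℝ)
    (ρ : ExtVertex d n → ℝ) : Continuous (xyEnergy d n Λ J ρ) := by
  classical
  unfold xyEnergy
  exact continuous_const.mul <| continuous_finsetSum _ fun u _ =>
    continuous_finsetSum _ fun w _ =>
      continuous_if_const _ (fun _ => by fun_prop) fun _ => continuous_const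

lemma integrable_exp_xyEnergy (Λ : Finset (ExtVertex d n))
    (J : ExtVertex d n → ExtVertex d n → ℝ) (ρ : ExtVertex d n → ℝ) :
    Integrable (fun θ : ↑Λ → ℝ => Real.exp (xyEnergy d n Λ J ρ (extFun Λ θ)))
      (angleMeasure ↑Λ) :=
  have hcont := Real.continuous_exp.comp ((continuous_xyEnergy Λ J ρ).comp (continuous_extFun Λ))
  (hcont.continuousOn.integrableOn_compact (isCompact_univ_pi fun _ => isCompact_Icc)).mono_set
    (Set.pi_mono fun _ _ => Set.Ico_subset_Icc_self)

lemma xyZ_pos (Λ : Finset (ExtVertex d n)) (J : ExtVertex d n → ExtVertex d n → ℝ)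
    (ρ : ExtVertex d n → ℝ) : 0 < xyZ d n Λ J ρ :=
  integral_exp_pos (integrable_exp_xyEnergy Λ J ρ)

end Analytic

section Wells

variable {d n L : ℕ}

lemma abs_boxSiteVal_le_one (r : ↑(box d L) → Bool) (u : ExtVertex d n) :
    |boxSiteVal d n L r u| ≤ 1 := by
  rcases u with x | _ <;> simp only [boxSiteVal] <;> try split_ifs
  all_goals norm_num

lemma boxSiteVal_update_self (r : ↑(box d L) → Bool) (x : ↑(box d L)) (b : Bool) :
    boxSiteVal d n L (Function.update r x b) (.inl x.1) = if b then 1 else 0 := by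
  simp [boxSiteVal, x.2]

lemma boxSiteVal_update_of_ne (r : ↑(box d L) → Bool) (x : ↑(box d L)) (b b' : Bool)
    {u : ExtVertex d n} (hu : u ≠ .inl x.1) :
    boxSiteVal d n L (Function.update r x b) u = boxSiteVal d n L (Function.update r x b') u := by
  rcases u with y | _
  · have hy : ∀ h : y ∈ box d L, (⟨y, h⟩ : ↑(box d L)) ≠ x := fun _ h => hu (by rw [← h])
    simp +contextual [boxSiteVal, hy]
  · rfl

lemma mixedJ_inl_left (β₁ β₂ : ℝ) (x : Vertex d) (w : ExtVertex d n) :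
    mixedJ d n β₁ β₂ (.inl x) w = β₁ := by
  cases w <;> rfl

lemma mixedJ_inl_right (β₁ β₂ : ℝ) (x : Vertex d) (u : ExtVertex d n) :
    mixedJ d n β₁ β₂ u (.inl x) = β₁ := by
  cases u <;> rfl

lemma xyEnergy_boxSiteVal_update_true_le (hn : 2 ≤ n) {β₁ : ℝ} (hβ₁ : 0 ≤ β₁) (β₂ : ℝ)
    (Λ : Finset (ExtVertex d n)) (r : ↑(box d L) → Bool) (x : ↑(box d L))
    (θ : ExtVertex d n → ℝ) :
    xyEnergy d n Λ (mixedJ d n β₁ β₂) (boxSiteVal d n L (Function.update r x true)) θ ≤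
      xyEnergy d n Λ (mixedJ d n β₁ β₂) (boxSiteVal d n L (Function.update r x false)) θ +
        2 * d * β₁ := by
  classical
  have hE := xyEnergy_le_add_of_eq_zero Λ (mixedJ d n β₁ β₂) (v := .inl x.1) (K := β₁)
    (fun u hu => boxSiteVal_update_of_ne r x true false hu)
    (by rw [boxSiteVal_update_self]; rfl) (abs_boxSiteVal_le_one _)
    (fun w => by simp [mixedJ_inl_left, mixedJ_inl_right, abs_of_nonneg hβ₁]) θ
  have hdeg : ((Λ.filter (extAdj d n (.inl x.1))).card : ℝ) ≤ 2 * d := by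
    exact_mod_cast card_filter_extAdj_inl_le hn Λ x.1
  linarith [mul_le_mul_of_nonneg_left hdeg hβ₁]

lemma wellsZ_update_true_le (hn : 2 ≤ n) {β₁ : ℝ} (hβ₁ : 0 ≤ β₁) (β₂ : ℝ)
    (r : ↑(box d L) → Bool) (x : ↑(box d L)) :
    wellsZ d n L β₁ β₂ (Function.update r x true) ≤
      Real.exp (2 * d * β₁) * wellsZ d n L β₁ β₂ (Function.update r x false) := by
  unfold wellsZ xyZ
  rw [← integral_const_mul]
  refine integral_mono (integrable_exp_xyEnergy _ _ _)
    ((integrable_exp_xyEnergy _ _ _).const_mul _) fun θ => ?_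
  rw [← Real.exp_add, Real.exp_le_exp, add_comm]
  exact xyEnergy_boxSiteVal_update_true_le hn hβ₁ β₂ _ r x _

lemma wellsZ_odds_le (hn : 2 ≤ n) {β₁ : ℝ} (hβ₁ : 0 ≤ β₁) (β₂ : ℝ)
    (x : ↑(box d L)) (r : ↑(box d L) → Bool) :
    (1 - 1 / (1 + Real.exp (-(2 * d * β₁)))) * wellsZ d n L β₁ β₂ (Function.update r x true) ≤
      1 / (1 + Real.exp (-(2 * d * β₁))) * wellsZ d n L β₁ β₂ (Function.update r x false) := by
  have hq : 1 - 1 / (1 + Real.exp (-(2 * d * β₁))) =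
      1 / (1 + Real.exp (-(2 * d * β₁))) * Real.exp (-(2 * d * β₁)) := by
    field_simp
    ring
  have hexp : Real.exp (-(2 * d * β₁)) * Real.exp (2 * d * β₁) = 1 := by
    rw [← Real.exp_add, neg_add_cancel, Real.exp_zero]
  rw [hq, mul_assoc]
  gcongr
  calc Real.exp (-(2 * d * β₁)) * wellsZ d n L β₁ β₂ (Function.update r x true)
      ≤ Real.exp (-(2 * d * β₁)) *
          (Real.exp (2 * d * β₁) * wellsZ d n L β₁ β₂ (Function.update r x false)) := by
        gcongr
        exact wellsZ_update_true_le hn hβ₁ β₂ r x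
    _ = wellsZ d n L β₁ β₂ (Function.update r x false) := by rw [← mul_assoc, hexp, one_mul]

end Wells

theorem wells_disorder_stochastic_domination
    (d : ℕ) (β₁ : ℝ) (hβ₁ : 0 < β₁)
    (L n : ℕ) (hn : 2 ≤ n) (β₂ : ℝ)
    (f : (↑(box d L) → Bool) → ℝ)
    (hfmono : ∀ r r' : ↑(box d L) → Bool, (∀ x, r x = true → r' x = true) → f r ≤ f r') :
    ∑ r : ↑(box d L) → Bool, f r * wellsNu d n L β₁ β₂ r ≤
      ∑ r : ↑(box d L) → Bool, f r *
        ∏ x : ↑(box d L),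
          (if r x then 1 / (1 + Real.exp (-(2 * d * β₁)))
           else 1 - 1 / (1 + Real.exp (-(2 * d * β₁)))) := by
  set p := 1 / (1 + Real.exp (-(2 * d * β₁)))
  have hp0 : 0 ≤ p := by positivity
  have hp1 : p ≤ 1 := div_le_one_of_le₀ (by linarith [Real.exp_pos (-(2 * d * β₁))]) (by positivity)
  have hZ : 0 < ∑ r, wellsZ d n L β₁ β₂ r :=
    Finset.sum_pos (fun r _ => xyZ_pos _ _ _) Finset.univ_nonempty
  have hf : Monotone f := fun r r' h => hfmono r r' fun x => Bool.le_iff_imp.mp (h x)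
  calc ∑ r, f r * wellsNu d n L β₁ β₂ r
      = (∑ r, wellsZ d n L β₁ β₂ r * f r) / ∑ r, wellsZ d n L β₁ β₂ r := by
        simp only [wellsNu, Finset.sum_div]
        exact Finset.sum_congr rfl fun r _ => by ring
    _ ≤ bernoulliSum p f := (div_le_iff₀ hZ).mpr <|
        (sum_mul_le_mul_bernoulliSum hp0 hp1 (wellsZ_odds_le hn hβ₁.le β₂) hf).trans_eq
          (mul_comm _ _)
    _ = _ := Finset.sum_congr rfl fun r _ => mul_comm _ _

end
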